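/- LP^s (LP with strong implication and logical constants) is functionally complete: for every n and every function f : {⊤,+,⊥}^n → {⊤,+,⊥}, there is a propositional formula φ(p₁,…,pₙ) built from variables, constants ⊤, +, ⊥, ¬, ∧, and strong implication ⇒, whose evaluation function equals f. -/
import Mathlib


inductive TV where
  | top | par | bot
deriving DecidableEq

open TV

def toR : TV → ℚ
  | top => 1
  | par => 1/2
  | bot => 0

def tvNeg : TV → TV
  | top => bot
  | par => par
  | bot => top

def tvAnd : TV → TV → TV
  | top, b   => b
  | par, top => par
  | par, par => par
  | par, bot => bot
  | bot, _   => bot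

/-- Strong implication: ⊤ if a ≤ b in the order ⊥ < + < ⊤, else ⊥. -/
def tvSimp (a b : TV) : TV := if toR a ≤ toR b then top else bot

/-- LP^s propositional formulas in `n` variables, with logical constants. -/
inductive FmS (n : ℕ) where
  | var : Fin n → FmS n
  | const : TV → FmS n
  | neg : FmS n → FmS n
  | and : FmS n → FmS n → FmS n
  | simp : FmS n → FmS n → FmS n

def evalS {n : ℕ} : FmS n → (Fin n → TV) → TV
  | .var i, v => v i
  | .const c, _ => c
  | .neg φ, v => tvNeg (evalS φ v)
  | .and φ ψ, v => tvAnd (evalS φ v) (evalS ψ v)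
  | .simp φ ψ, v => tvSimp (evalS φ v) (evalS ψ v)

instance : Fintype TV :=
  ⟨{TV.top, TV.par, TV.bot}, by intro x; cases x <;> simp⟩

def bic {n : ℕ} (φ ψ : FmS n) : FmS n := .and (.simp φ ψ) (.simp ψ φ)

lemma eval_bic {n : ℕ} (φ ψ : FmS n) (v : Fin n → TV) :
    evalS (bic φ ψ) v = if evalS φ v = evalS ψ v then top else bot := by
  cases h1 : evalS φ v <;> cases h2 : evalS ψ v <;>
    simp [bic, evalS, tvSimp, toR, tvAnd, h1, h2] <;> norm_num

def chi {n : ℕ} (w : Fin n → TV) : FmS n :=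
  (List.finRange n).foldr (fun i acc => .and (bic (.var i) (.const (w i))) acc) (.const top)

lemma eval_chi_aux {n : ℕ} (w v : Fin n → TV) (l : List (Fin n)) :
    evalS (l.foldr (fun i acc => .and (bic (.var i) (.const (w i))) acc) (.const top)) v
      = if ∀ i ∈ l, v i = w i then top else bot := by
  induction l with
  | nil => simp [evalS]
  | cons hd tl ih =>
    rw [List.foldr_cons,
      show ∀ a b : FmS n, evalS (FmS.and a b) v = tvAnd (evalS a v) (evalS b v)
        from fun _ _ => rfl, eval_bic, ih]
    simp only [evalS]
    by_cases h : v hd = w hd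
    · by_cases h2 : ∀ i ∈ tl, v i = w i <;> simp [h, h2, tvAnd]
    · simp [h, tvAnd]

lemma eval_chi {n : ℕ} (w v : Fin n → TV) :
    evalS (chi w) v = if v = w then top else bot := by
  rw [chi, eval_chi_aux]
  congr 1
  simp [funext_iff]

def fmOr {n : ℕ} (φ ψ : FmS n) : FmS n := .neg (.and (.neg φ) (.neg ψ))

lemma eval_or {n : ℕ} (φ ψ : FmS n) (v : Fin n → TV) :
    evalS (fmOr φ ψ) v = tvNeg (tvAnd (tvNeg (evalS φ v)) (tvNeg (evalS ψ v))) := rfl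

def bigFm {n : ℕ} (f : (Fin n → TV) → TV) (L : List (Fin n → TV)) : FmS n :=
  L.foldr (fun w acc => fmOr (.and (chi w) (.const (f w))) acc) (.const bot)

lemma eval_bigFm {n : ℕ} (f : (Fin n → TV) → TV) (L : List (Fin n → TV))
    (hnd : L.Nodup) (v : Fin n → TV) :
    evalS (bigFm f L) v = if v ∈ L then f v else bot := by
  induction L with
  | nil => simp [bigFm, evalS]
  | cons hd tl ih =>
    have hnd' := hnd
    rw [List.nodup_cons] at hnd'
    simp only [bigFm, List.foldr_cons, eval_or, evalS, eval_chi] at *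
    by_cases h : v = hd
    · subst h
      rw [ih hnd'.2]
      simp [hnd'.1, tvAnd]
      cases f v <;> simp [tvAnd, tvNeg]
    · rw [ih hnd'.2]
      by_cases h2 : v ∈ tl <;> simp [h, h2, tvAnd, tvNeg] <;> cases f v <;> simp [tvNeg]

/-- LP^s is functionally complete: every n-ary truth function is the
evaluation function of some LP^s formula. -/
theorem LPs_functionally_complete :
    ∀ (n : ℕ) (f : (Fin n → TV) → TV), ∃ φ : FmS n, ∀ v, evalS φ v = f v := by
  intro n f
  refine ⟨bigFm f (Finset.univ : Finset (Fin n → TV)).toList, fun v => ?_⟩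
  rw [eval_bigFm f _ (Finset.nodup_toList _) v]
  simp
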